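/- Let n ≥ 3 be an odd integer. Then Q_n − (c_1^n + c_1^{n−3}·c_3)/2 lies in ℤ[c_1, c_2, c_3, …]; that is, every coefficient of the polynomial Q_n − (1/2)·c_1^n − (1/2)·c_1^{n−3}·c_3 is an integer. (This is the odd case of the universal von Staudt theorem: B̂_n/n ≡ (c_1^n + c_1^{n−3} c_3)/2 mod ℤ[c_1, c_2, …] for odd n ≥ 3.) -/

import Mathlib

open Nat MvPolynomial

noncomputable section

/-- weight of a partition given as multiplicity function -/
def pWeight (U : ℕ →₀ ℕ) : ℕ := U.sum fun j m => j * m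

/-- degree of a partition -/
def pDegree (U : ℕ →₀ ℕ) : ℕ := U.sum fun _ m => m

/-- γ_U = ∏_j (j+1)^{U j} (U j)! -/
def pGamma (U : ℕ →₀ ℕ) : ℕ := U.prod fun j m => (j + 1) ^ m * m !

/-- τ_U = (-1)^{d(U)-1} (w(U)+d(U)-2)! / γ_U -/
def pTau (U : ℕ →₀ ℕ) : ℚ :=
  (-1) ^ (pDegree U - 1) * ((pWeight U + pDegree U - 2)! : ℚ) / (pGamma U : ℚ)

/-- Q n = B̂_n / n, the Schur function expression of the universal Bernoulli numbers -/
def Q (n : ℕ) : MvPolynomial ℕ ℚ :=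
  ∑ᶠ U ∈ {U : ℕ →₀ ℕ | U 0 = 0 ∧ pWeight U = n}, monomial U (pTau U)

/-- A polynomial over ℚ is ≡ 0 mod p^M iff every nonzero coefficient has
p-adic valuation at least M. -/
def CongZeroModPpow (p : ℕ) (M : ℕ) (P : MvPolynomial ℕ ℚ) : Prop :=
  ∀ m : ℕ →₀ ℕ, P.coeff m ≠ 0 → (M : ℤ) ≤ padicValRat p (P.coeff m)

/-!
Write `N = w(U) + d(U) = ∑ⱼ (j + 1) Uⱼ`, so that `τ_U = ±(N - 2)! / γ_U`. Each factor
`(j + 1)^Uⱼ Uⱼ!` of `γ_U` divides `((j + 1) Uⱼ)!`, so `γ_U ∣ N!`; the point is to save the two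
factors `N (N - 1)`, and this is done one prime `p` at a time. If some part `c = j + 1 ≠ p` occurs
(and not `c = 4` with multiplicity `≤ 2` when `p = 2`), its block already satisfies
`v_p(c^m m!) ≤ v_p((c m - 2)!)`. Otherwise either `p` is odd and every part equals `p`, which makes
the weight even, or `p = 2` and `U = 1^a 3^b` with `b ≤ 2`. The case `b = 2` is checked directly,
and `b ≤ 1` are the two monomials `c₁ⁿ` and `c₁ⁿ⁻³ c₃`, for which `(2m)! = 2^m m! (2m - 1)‼` shows
that `τ_U` is an odd integer divided by `2`.
-/

theorem Nat.pow_mul_factorial_dvd_factorial_mul {c : ℕ} (hc : c ≠ 0) (m : ℕ) :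
    c ^ m * m ! ∣ (c * m)! := by
  induction m with
  | zero => simp
  | succ m ih =>
    have hlast : (c * m)! * (c * m + c) ∣ (c * m + c)! := by
      obtain ⟨d, hd⟩ : ∃ d, c = d + 1 := ⟨c - 1, by omega⟩
      rw [hd, ← add_assoc, factorial_succ, mul_comm]
      exact mul_dvd_mul_left _ (factorial_dvd_factorial (by omega))
    calc c ^ (m + 1) * (m + 1)! = c ^ m * m ! * (c * m + c) := by
          rw [factorial_succ, pow_succ]; ring
      _ ∣ (c * m) ! * (c * m + c) := mul_dvd_mul_right ih _
      _ ∣ (c * (m + 1))! := by rwa [mul_add_one]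

theorem Nat.doubleFactorial_dvd_factorial (n : ℕ) : n‼ ∣ n ! := by
  cases n with
  | zero => rfl
  | succ n => exact Dvd.intro _ (factorial_eq_mul_doubleFactorial n).symm

theorem Nat.odd_doubleFactorial_two_mul_add_one (n : ℕ) : Odd (2 * n + 1)‼ := by
  rw [doubleFactorial_eq_prod_odd]
  exact Finset.prod_induction _ _ (fun _ _ ↦ Odd.mul) odd_one fun i _ ↦ odd_two_mul_add_one _

theorem Nat.exists_odd_doubleFactorial_two_mul_add_one_eq_mul {i n : ℕ} (hi : i < n) :
    ∃ L, Odd L ∧ (2 * n + 1)‼ = (2 * i + 3) * L := by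
  refine ⟨∏ j ∈ (Finset.range n).erase i, (2 * (j + 1) + 1), ?_, ?_⟩
  · exact Finset.prod_induction _ _ (fun _ _ ↦ Odd.mul) odd_one fun j _ ↦ odd_two_mul_add_one _
  · rw [doubleFactorial_eq_prod_odd, ← Finset.mul_prod_erase _ _ (Finset.mem_range.2 hi)]
    ring

section PadicValNat

variable {p : ℕ} [Fact p.Prime]

theorem padicValNat_le_of_dvd {a b : ℕ} (hb : b ≠ 0) (h : a ∣ b) :
    padicValNat p a ≤ padicValNat p b :=
  (padicValNat_dvd_iff_le hb).1 (pow_padicValNat_dvd.trans h)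

theorem padicValNat_factorial_le_of_le {a b : ℕ} (h : a ≤ b) :
    padicValNat p a ! ≤ padicValNat p b ! :=
  padicValNat_le_of_dvd (factorial_ne_zero b) (factorial_dvd_factorial h)

theorem padicValNat_add_two_le {x : ℕ} (hx : 3 ≤ x) : padicValNat p x + 2 ≤ x := by
  set v := padicValNat p x
  have hpow : 2 ^ v ≤ x := (Nat.pow_le_pow_left (Fact.out : p.Prime).two_le v).trans
    (Nat.le_of_dvd (by omega) pow_padicValNat_dvd)
  rcases Nat.lt_or_ge v 2 with hv | hv
  · omega
  · obtain ⟨w, hw⟩ : ∃ w, v = w + 2 := ⟨v - 2, by omega⟩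
    have := Nat.lt_two_pow_self (n := w + 1)
    rw [hw, pow_succ] at hpow
    omega

theorem padicValNat_factorial_add_two {X : ℕ} (h : p ∣ X + 2) :
    padicValNat p (X + 2)! = padicValNat p X ! + padicValNat p (X + 2) := by
  have hX1 : padicValNat p (X + 1) = 0 := by
    refine padicValNat.eq_zero_of_not_dvd fun h1 ↦ (Fact.out : p.Prime).one_lt.ne' ?_
    simpa using Nat.dvd_sub h h1
  rw [factorial_succ, factorial_succ, padicValNat.mul (by omega) (by positivity),
    padicValNat.mul (by omega) (by positivity), hX1]
  ring

theorem add_one_add_padicValNat_add_padicValNat_le {k m : ℕ} (hk : 2 ≤ k) (hm : m ≠ 0)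
    (h4 : p = 2 → k = 2 → 3 ≤ m) : m + 1 + padicValNat p k + padicValNat p m ≤ k * m := by
  have hvm : padicValNat p m < m := padicValNat_lt_self hm
  rcases Nat.lt_or_ge k 3 with hk2 | hk3
  · obtain rfl : k = 2 := by omega
    by_cases hp2 : p = 2
    · subst hp2
      have := padicValNat_add_two_le (p := 2) (h4 rfl rfl)
      rw [padicValNat_self]
      omega
    · have h2 : ¬p ∣ 2 := fun h ↦
        hp2 ((Nat.prime_dvd_prime_iff_eq Fact.out Nat.prime_two).1 h)
      rw [padicValNat.eq_zero_of_not_dvd h2]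
      omega
  · have := padicValNat_add_two_le (p := p) hk3
    have hm1 : 1 ≤ m := Nat.one_le_iff_ne_zero.2 hm
    nlinarith

theorem padicValNat_pow_mul_factorial_le_factorial_mul_sub_two {c m : ℕ} (hc : 2 ≤ c)
    (hcp : c ≠ p) (hm : m ≠ 0) (h4 : p = 2 → c = 4 → 3 ≤ m) :
    padicValNat p (c ^ m * m !) ≤ padicValNat p (c * m - 2)! := by
  rw [padicValNat.mul (pow_ne_zero _ (by omega)) (factorial_ne_zero m), padicValNat.pow]
  by_cases hpc : p ∣ c
  · -- Here `p ∤ c m - 1`, so `(c m - 2)!` only loses `v_p(c m)` against `(c m)!`, and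
    -- Legendre's `v_p((p k m)!) = k m + v_p((k m)!)` leaves room for it.
    obtain ⟨k, rfl⟩ := hpc
    have hp : p.Prime := Fact.out
    have hk : 2 ≤ k := by
      rcases Nat.lt_or_ge k 2 with h | h
      · interval_cases k <;> simp_all
      · exact h
    have hsize : 2 * 2 * 1 ≤ p * k * m :=
      Nat.mul_le_mul (Nat.mul_le_mul hp.two_le hk) (Nat.one_le_iff_ne_zero.2 hm)
    obtain ⟨X, hX⟩ : ∃ X, p * k * m = X + 2 := ⟨p * k * m - 2, by omega⟩
    have hlegendre :=
      padicValNat_factorial_add_two (p := p) (X := X) ⟨k * m, by rw [← hX, mul_assoc]⟩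
    rw [← hX, mul_assoc, padicValNat_factorial_mul, padicValNat.mul hp.ne_zero (by positivity),
      padicValNat.mul (by omega) hm, padicValNat_self] at hlegendre
    have hkm : m * padicValNat p k + padicValNat p m ! ≤ padicValNat p (k * m)! := by
      have := padicValNat_le_of_dvd (p := p) (factorial_ne_zero _)
        (Nat.pow_mul_factorial_dvd_factorial_mul (c := k) (by omega) m)
      rwa [padicValNat.mul (pow_ne_zero _ (by omega)) (factorial_ne_zero m),
        padicValNat.pow] at this
    have := add_one_add_padicValNat_add_padicValNat_le (p := p) hk hm
      (fun h2 hk2 ↦ h4 h2 (by rw [h2, hk2]))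
    rw [show p * k * m - 2 = X by omega, padicValNat.mul hp.ne_zero (by omega), padicValNat_self]
    nlinarith
  · rw [padicValNat.eq_zero_of_not_dvd hpc, mul_zero, zero_add]
    rcases Nat.lt_or_ge m 2 with h | h
    · obtain rfl : m = 1 := by omega
      simp
    · have : 2 * m ≤ c * m := Nat.mul_le_mul_right m hc
      exact padicValNat_factorial_le_of_le (by omega)

end PadicValNat

theorem pWeight_add_pDegree (U : ℕ →₀ ℕ) :
    pWeight U + pDegree U = U.sum fun j m ↦ (j + 1) * m := by
  simp only [pWeight, pDegree, Finsupp.sum, ← Finset.sum_add_distrib, add_one_mul]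

theorem pWeight_add (U V : ℕ →₀ ℕ) : pWeight (U + V) = pWeight U + pWeight V :=
  Finsupp.sum_add_index' (fun _ ↦ mul_zero _) fun _ _ _ ↦ mul_add _ _ _

theorem pDegree_add (U V : ℕ →₀ ℕ) : pDegree (U + V) = pDegree U + pDegree V :=
  Finsupp.sum_add_index' (fun _ ↦ rfl) fun _ _ _ ↦ rfl

theorem pGamma_add {U V : ℕ →₀ ℕ} (h : Disjoint U.support V.support) :
    pGamma (U + V) = pGamma U * pGamma V :=
  Finsupp.prod_add_index_of_disjoint h _

@[simp] theorem pWeight_single (j m : ℕ) : pWeight (Finsupp.single j m) = j * m :=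
  Finsupp.sum_single_index (mul_zero j)

@[simp] theorem pDegree_single (j m : ℕ) : pDegree (Finsupp.single j m) = m :=
  Finsupp.sum_single_index rfl

@[simp] theorem pGamma_single (j m : ℕ) : pGamma (Finsupp.single j m) = (j + 1) ^ m * m ! :=
  Finsupp.prod_single_index (by simp)

theorem pGamma_ne_zero (U : ℕ →₀ ℕ) : pGamma U ≠ 0 :=
  Finset.prod_ne_zero_iff.2 fun _ _ ↦ by positivity

theorem mul_le_pWeight (U : ℕ →₀ ℕ) (j : ℕ) : j * U j ≤ pWeight U := by
  by_cases hj : j ∈ U.support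
  · exact Finset.single_le_sum (f := fun j ↦ j * U j) (fun _ _ ↦ Nat.zero_le _) hj
  · simp [Finsupp.notMem_support_iff.1 hj]

theorem even_pWeight_of_forall_even {U : ℕ →₀ ℕ} (h : ∀ j ∈ U.support, Even j) :
    Even (pWeight U) :=
  Finset.even_sum _ fun j hj ↦ (h j hj).mul_right _

theorem exists_intCast_eq_pTau_of_dvd {U : ℕ →₀ ℕ}
    (h : pGamma U ∣ (pWeight U + pDegree U - 2)!) : ∃ z : ℤ, pTau U = z := by
  obtain ⟨k, hk⟩ := h
  refine ⟨(-1) ^ (pDegree U - 1) * k, ?_⟩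
  have := pGamma_ne_zero U
  rw [pTau, hk]
  push_cast
  field_simp

section SingleOneAddSingleThree

open Finsupp

theorem disjoint_support_single_one_single_three (a b : ℕ) :
    Disjoint (single 1 a).support (single 3 b).support :=
  Finset.disjoint_of_subset_left support_single_subset
    (Finset.disjoint_of_subset_right support_single_subset (by decide))

theorem eq_single_one_add_single_three {U : ℕ →₀ ℕ} (h : U.support ⊆ {1, 3}) :
    U = single 1 (U 1) + single 3 (U 3) := by
  ext j
  rcases em (j = 1) with rfl | h1
  · simp
  rcases em (j = 3) with rfl | h3
  · simp
  have hj : j ∉ U.support := fun hj ↦ by simpa [h1, h3] using h hj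
  simp [Finsupp.notMem_support_iff.1 hj, Ne.symm h1, Ne.symm h3]

theorem pWeight_single_one_add_single_three (a b : ℕ) :
    pWeight (single 1 a + single 3 b) = a + 3 * b := by
  simp [pWeight_add]

theorem pDegree_single_one_add_single_three (a b : ℕ) :
    pDegree (single 1 a + single 3 b) = a + b := by
  simp [pDegree_add]

theorem pGamma_single_one_add_single_three (a b : ℕ) :
    pGamma (single 1 a + single 3 b) = 2 ^ a * a ! * (4 ^ b * b !) := by
  simp [pGamma_add (disjoint_support_single_one_single_three a b)]

theorem pGamma_single_one_add_single_three_two_dvd_factorial {a : ℕ} (ha : Odd a) :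
    pGamma (single 1 a + single 3 2) ∣
      (pWeight (single 1 a + single 3 2) + pDegree (single 1 a + single 3 2) - 2)! := by
  obtain ⟨k, rfl⟩ := ha
  rw [pGamma_single_one_add_single_three, pWeight_single_one_add_single_three,
    pDegree_single_one_add_single_three, show 2 * k + 1 + 3 * 2 + (2 * k + 1 + 2) - 2 =
      2 * (2 * k + 4) by omega]
  calc 2 ^ (2 * k + 1) * (2 * k + 1)! * (4 ^ 2 * 2!)
      ∣ 2 ^ (2 * k + 4) * (2 * k + 4)! :=
        Dvd.intro ((k + 1) * (k + 2) * (2 * k + 3)) (by simp only [factorial_succ]; ring)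
    _ = (2 * (2 * k + 4))‼ := (doubleFactorial_two_mul _).symm
    _ ∣ (2 * (2 * k + 4))! := doubleFactorial_dvd_factorial _

theorem pTau_single_one (k : ℕ) :
    ∃ L : ℕ, Odd L ∧ pTau (single 1 (2 * k + 3)) = L / 2 := by
  obtain ⟨L, hL, hfac⟩ :=
    Nat.exists_odd_doubleFactorial_two_mul_add_one_eq_mul (i := k) (n := 2 * k + 1) (by omega)
  refine ⟨L, hL, ?_⟩
  have hsize : 2 * k + 3 + (2 * k + 3) - 2 = 2 * (2 * k + 1) + 1 + 1 := by omega
  rw [pTau, pWeight_single, pDegree_single, pGamma_single, one_mul, hsize,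
    factorial_eq_mul_doubleFactorial, hfac,
    show 2 * (2 * k + 1) + 1 + 1 = 2 * (2 * k + 2) by ring, doubleFactorial_two_mul,
    show 2 * k + 3 - 1 = 2 * (k + 1) by omega, pow_mul, neg_one_sq, one_pow, one_mul]
  push_cast [factorial_succ]
  field_simp
  ring

theorem pTau_single_one_add_single_three_one (k : ℕ) :
    ∃ L : ℕ, Odd L ∧ pTau (single 1 (2 * k) + single 3 1) = L / 2 := by
  refine ⟨(2 * k + 1) * (2 * (2 * k) + 1)‼,
    (odd_two_mul_add_one k).mul (Nat.odd_doubleFactorial_two_mul_add_one _), ?_⟩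
  have hsize : 2 * k + 3 * 1 + (2 * k + 1) - 2 = 2 * (2 * k) + 1 + 1 := by omega
  rw [pTau, pWeight_single_one_add_single_three, pDegree_single_one_add_single_three,
    pGamma_single_one_add_single_three, hsize, factorial_eq_mul_doubleFactorial,
    show 2 * (2 * k) + 1 + 1 = 2 * (2 * k + 1) by ring, doubleFactorial_two_mul,
    show 2 * k + 1 - 1 = 2 * k by omega, pow_mul, neg_one_sq, one_pow, one_mul]
  push_cast [factorial_succ]
  field_simp
  ring

end SingleOneAddSingleThree

section PadicValNat

variable {p : ℕ} [Fact p.Prime]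

theorem padicValNat_pGamma_le_of_part {U : ℕ →₀ ℕ} {j : ℕ} (hj : j ∈ U.support)
    (hj0 : j ≠ 0)
    (hpart : padicValNat p ((j + 1) ^ U j * (U j)!) ≤ padicValNat p ((j + 1) * U j - 2)!) :
    padicValNat p (pGamma U) ≤ padicValNat p (pWeight U + pDegree U - 2)! := by
  set R := ∑ i ∈ U.support.erase j, (i + 1) * U i
  have hsize : pWeight U + pDegree U - 2 = ((j + 1) * U j - 2) + R := by
    have : 2 * 1 ≤ (j + 1) * U j :=
      Nat.mul_le_mul (by omega) (Nat.one_le_iff_ne_zero.2 (Finsupp.mem_support_iff.1 hj))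
    rw [pWeight_add_pDegree, Finsupp.sum, ← Finset.add_sum_erase _ _ hj]
    omega
  have hγ : pGamma U = (j + 1) ^ U j * (U j)! *
      ∏ i ∈ U.support.erase j, (i + 1) ^ U i * (U i)! := by
    rw [pGamma, Finsupp.prod, ← Finset.mul_prod_erase _ _ hj]
  have hrest : ∏ i ∈ U.support.erase j, (i + 1) ^ U i * (U i)! ∣ R ! :=
    (Finset.prod_dvd_prod_of_dvd _ _ fun i _ ↦
      Nat.pow_mul_factorial_dvd_factorial_mul i.succ_ne_zero _).trans
      (Nat.prod_factorial_dvd_factorial_sum _ _)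
  rw [hγ, hsize, padicValNat.mul (by positivity)
    (Finset.prod_ne_zero_iff.2 fun _ _ ↦ by positivity)]
  calc _ ≤ padicValNat p ((j + 1) * U j - 2)! + padicValNat p R ! :=
        Nat.add_le_add hpart (padicValNat_le_of_dvd (factorial_ne_zero _) hrest)
    _ = padicValNat p (((j + 1) * U j - 2)! * R !) :=
        (padicValNat.mul (factorial_ne_zero _) (factorial_ne_zero _)).symm
    _ ≤ _ := padicValNat_le_of_dvd (factorial_ne_zero _)
        (factorial_mul_factorial_dvd_factorial_add _ _)

open Finsupp in
theorem padicValNat_pGamma_le {U : ℕ →₀ ℕ} (hU0 : U 0 = 0) (hodd : Odd (pWeight U))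
    (hU : ∀ a b, b ≤ 1 → U ≠ single 1 a + single 3 b) :
    padicValNat p (pGamma U) ≤ padicValNat p (pWeight U + pDegree U - 2)! := by
  by_cases hpart : ∃ j ∈ U.support, j + 1 ≠ p ∧ (p = 2 → j + 1 = 4 → 3 ≤ U j)
  · obtain ⟨j, hj, hjp, h4⟩ := hpart
    have hj0 : j ≠ 0 := by rintro rfl; exact mem_support_iff.1 hj hU0
    exact padicValNat_pGamma_le_of_part hj hj0
      (padicValNat_pow_mul_factorial_le_factorial_mul_sub_two (by omega) hjp
        (mem_support_iff.1 hj) h4)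
  push Not at hpart
  rcases (Fact.out : p.Prime).eq_two_or_odd' with rfl | hp
  · have hsupp : U.support ⊆ {1, 3} := by
      intro j hj
      by_cases h : j + 1 = 2
      · simp [show j = 1 by omega]
      · simp [show j = 3 by have := hpart j hj h; omega]
    have h3 : U 3 = 2 := by
      have : U 3 < 3 := by
        by_cases h : 3 ∈ U.support
        · exact (hpart 3 h (by norm_num)).2.2
        · simp [notMem_support_iff.1 h]
      by_contra h3
      exact hU (U 1) (U 3) (by omega) (eq_single_one_add_single_three hsupp)
    rw [eq_single_one_add_single_three hsupp, h3] at hodd ⊢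
    rw [pWeight_single_one_add_single_three] at hodd
    exact padicValNat_le_of_dvd (factorial_ne_zero _)
      (pGamma_single_one_add_single_three_two_dvd_factorial
        ((Nat.odd_add.1 hodd).2 (by decide)))
  · refine absurd hodd (Nat.not_odd_iff_even.2 (even_pWeight_of_forall_even fun j hj ↦ ?_))
    have hjp : j + 1 = p := by
      by_contra h
      obtain ⟨rfl, -⟩ := hpart j hj h
      exact absurd hp (by decide)
    exact Nat.not_odd_iff_even.1 (Nat.odd_add_one.1 (hjp ▸ hp))

end PadicValNat

theorem pGamma_dvd_factorial {U : ℕ →₀ ℕ} (hU0 : U 0 = 0) (hodd : Odd (pWeight U))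
    (hU : ∀ a b, b ≤ 1 → U ≠ Finsupp.single 1 a + Finsupp.single 3 b) :
    pGamma U ∣ (pWeight U + pDegree U - 2)! := by
  refine (Nat.factorization_prime_le_iff_dvd (pGamma_ne_zero U) (factorial_ne_zero _)).1
    fun p hp ↦ ?_
  have := Fact.mk hp
  rw [Nat.factorization_def _ hp, Nat.factorization_def _ hp]
  exact padicValNat_pGamma_le hU0 hodd hU

theorem exists_intCast_eq_pTau {U : ℕ →₀ ℕ} {k : ℕ} (hU0 : U 0 = 0)
    (hw : pWeight U = 2 * k + 3) (h1 : U ≠ Finsupp.single 1 (2 * k + 3))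
    (h2 : U ≠ Finsupp.single 1 (2 * k) + Finsupp.single 3 1) : ∃ z : ℤ, pTau U = z := by
  refine exists_intCast_eq_pTau_of_dvd
    (pGamma_dvd_factorial hU0 (hw ▸ odd_two_mul_add_one (k + 1)) ?_)
  rintro a b hb rfl
  rw [pWeight_single_one_add_single_three] at hw
  interval_cases b
  · exact h1 (by rw [Finsupp.single_zero, add_zero, show a = 2 * k + 3 by omega])
  · exact h2 (by rw [show a = 2 * k by omega])

theorem exists_intCast_eq_sub_half_of_odd {L : ℕ} (hL : Odd L) :
    ∃ z : ℤ, (L / 2 - 1 / 2 : ℚ) = z := by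
  obtain ⟨t, rfl⟩ := hL
  exact ⟨t, by push_cast; ring⟩

theorem finite_setOf_pWeight_eq (n : ℕ) : {U : ℕ →₀ ℕ | U 0 = 0 ∧ pWeight U = n}.Finite := by
  refine (Set.finite_Iic (∑ j ∈ Finset.range (n + 1), Finsupp.single j n)).subset ?_
  rintro U ⟨hU0, rfl⟩
  rw [Set.mem_Iic, Finsupp.le_iff]
  intro j hj
  have hj0 : 1 ≤ j := Nat.one_le_iff_ne_zero.2 fun h ↦ Finsupp.mem_support_iff.1 hj (h ▸ hU0)
  have hUj : 1 ≤ U j := Nat.one_le_iff_ne_zero.2 (Finsupp.mem_support_iff.1 hj)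
  have hmul := mul_le_pWeight U j
  have hjle : j ≤ pWeight U := (Nat.le_mul_of_pos_right j hUj).trans hmul
  have hUle : U j ≤ pWeight U := (Nat.le_mul_of_pos_left (U j) hj0).trans hmul
  simpa [Finsupp.finsetSum_apply, Finsupp.single_apply, hjle] using hUle

theorem coeff_Q (n : ℕ) (v : ℕ →₀ ℕ) :
    (Q n).coeff v = if v 0 = 0 ∧ pWeight v = n then pTau v else 0 := by
  classical
  rw [Q, ← (finite_setOf_pWeight_eq n).coe_toFinset, finsum_mem_coe_finset, coeff_sum]
  simp only [coeff_monomial, Finset.sum_ite_eq', Set.Finite.mem_toFinset, Set.mem_ofPred_eq]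

/-- The odd case of the universal von Staudt theorem: for odd n ≥ 3,
B̂_n/n ≡ (c_1^n + c_1^{n-3} c_3)/2 mod ℤ[c_1, c_2, ...]; that is, every coefficient of
Q_n - (1/2)c_1^n - (1/2)c_1^{n-3}c_3 is an integer. -/
theorem universal_von_staudt_odd (n : ℕ) (h3 : 3 ≤ n) (hodd : Odd n) :
    ∀ v : ℕ →₀ ℕ, ∃ z : ℤ,
      (Q n - C (1 / 2 : ℚ) * (X 1 : MvPolynomial ℕ ℚ) ^ n
        - C (1 / 2 : ℚ) * (X 1 : MvPolynomial ℕ ℚ) ^ (n - 3) * X 3).coeff v = (z : ℚ) := by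
  obtain ⟨k, rfl⟩ : ∃ k, n = 2 * k + 3 := by
    obtain ⟨t, rfl⟩ := hodd
    exact ⟨t - 1, by omega⟩
  intro v
  rw [show 2 * k + 3 - 3 = 2 * k by omega, C_mul_X_pow_eq_monomial, C_mul_X_pow_eq_monomial, X,
    monomial_mul, mul_one, coeff_sub, coeff_sub, coeff_monomial, coeff_monomial, coeff_Q]
  have hne : Finsupp.single 1 (2 * k + 3) ≠ Finsupp.single 1 (2 * k) + Finsupp.single 3 1 := by
    intro h; simpa using DFunLike.congr_fun h 3
  rcases eq_or_ne v (Finsupp.single 1 (2 * k + 3)) with rfl | h1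
  · obtain ⟨L, hL, hτ⟩ := pTau_single_one k
    rw [if_pos ⟨by simp, by rw [pWeight_single, one_mul]⟩, if_pos rfl, if_neg hne.symm,
      sub_zero, hτ]
    exact exists_intCast_eq_sub_half_of_odd hL
  rcases eq_or_ne v (Finsupp.single 1 (2 * k) + Finsupp.single 3 1) with rfl | h2
  · obtain ⟨L, hL, hτ⟩ := pTau_single_one_add_single_three_one k
    rw [if_pos ⟨by simp, pWeight_single_one_add_single_three _ _⟩, if_neg hne, if_pos rfl,
      sub_zero, hτ]
    exact exists_intCast_eq_sub_half_of_odd hL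
  rw [if_neg h1.symm, if_neg h2.symm, sub_zero, sub_zero]
  split_ifs with hv
  · exact exists_intCast_eq_pTau hv.1 hv.2 h1 h2
  · exact ⟨0, by simp⟩

end
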